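/- Let H be a complex Hilbert space and let 𝓡 be a selfadjoint subalgebra of B(H) (i.e. R ∈ 𝓡 implies R* ∈ 𝓡). If the closure of 𝓡 in the weak operator topology is a localizing algebra, then 𝓡 itself is a localizing algebra. -/

import Mathlib

open Filter Topology

/-- A linear subspace `𝒳 ⊆ B(H)` is *localizing* if there exists a closed ball `B ⊆ H`
with `0 ∉ B` such that for every sequence in `B` there are a subsequence and operators
`X_j ∈ 𝒳` with `‖X_j‖ ≤ 1` such that `X_j x_{n_j}` converges in norm to a nonzero vector. -/
def IsLocalizing {E : Type*} [NormedAddCommGroup E] [NormedSpace ℂ E]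
    (𝒳 : Set (E →L[ℂ] E)) : Prop :=
  ∃ (c : E) (r : ℝ) , 0 < r ∧ (0 : E) ∉ Metric.closedBall c r ∧
    ∀ x : ℕ → E, (∀ n, x n ∈ Metric.closedBall c r) →
      ∃ (n : ℕ → ℕ) (X : ℕ → E →L[ℂ] E) (y : E), StrictMono n ∧
        (∀ j, X j ∈ 𝒳) ∧ (∀ j, ‖X j‖ ≤ 1) ∧ y ≠ 0 ∧
        Tendsto (fun j => X j (x (n j))) atTop (𝓝 y)

/-- The closure of a set of operators in the weak operator topology. -/
def wotClosure (E : Type*) [NormedAddCommGroup E] [NormedSpace ℂ E]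
    (S : Set (E →L[ℂ] E)) : Set (E →L[ℂ] E) :=
  {T | (ContinuousLinearMapWOT.ofCLM T : E →WOT[ℂ] E) ∈
    closure ((ContinuousLinearMapWOT.ofCLM : (E →L[ℂ] E) → E →WOT[ℂ] E) '' S)}

/-!
The heart of the matter is a pointwise Kaplansky density theorem: an operator `T` with `‖T‖ ≤ 1`
in the WOT-closure of a selfadjoint algebra `A` can be approximated at any vector by elements of
`A` of norm at most `1`. Applied along the subsequence `X_j x_{n_j}`, this transfers the localizing
property from the closure to `A`.

For selfadjoint `T`, write `T = f(S)` with `f(t) = 2t / (1 + t²)` and `S` selfadjoint in the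
WOT-closure. The selfadjoint part of `A` is convex, so `S` is approximated by selfadjoint `a ∈ A`
strongly at finitely many vectors; `f(a) - f(S)` factors through `a - S` applied to two vectors
determined by `S` and `x`, and `‖f(a)‖ ≤ 1`. A general `T` is handled through its Hermitian
dilation `[[0, T], [T*, 0]]` on `H ⊕ H`, which lies in the WOT-closure of `M₂(A)`.
-/

open Set

section WOTClosure

open ContinuousLinearMapWOT

variable {E F : Type*} [NormedAddCommGroup E] [NormedSpace ℂ E] [NormedAddCommGroup F]
  [NormedSpace ℂ F]

lemma isClosed_wotClosure (S : Set (E →L[ℂ] E)) : IsClosed (wotClosure E S) :=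
  isClosed_closure.preimage continuous_ofCLM

lemma mapsTo_wotClosure {g : (E →L[ℂ] E) → (F →L[ℂ] F)}
    (hg : Continuous fun A : E →WOT[ℂ] E => ofCLM (g (toCLM A)))
    {S : Set (E →L[ℂ] E)} {S' : Set (F →L[ℂ] F)} (h : MapsTo g S S') :
    MapsTo g (wotClosure E S) (wotClosure F S') := fun _ hT =>
  map_mem_closure (f := fun A => ofCLM (g (toCLM A))) hg hT
    (by rintro _ ⟨M, hM, rfl⟩; exact ⟨g M, h hM, rfl⟩)

lemma continuous_ofCLM_comp_comp (C : E →L[ℂ] F) (D : F →L[ℂ] E) :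
    Continuous fun A : E →WOT[ℂ] E => ofCLM (C ∘L toCLM A ∘L D) :=
  continuous_of_dual_apply_continuous fun x y => continuous_dual_apply (D x) (y ∘L C)

/-- The WOT-closure of a convex set lies in its strong closure. -/
lemma Convex.exists_forall_norm_apply_sub_lt_of_mem_wotClosure {S : Set (E →L[ℂ] E)}
    (hS : Convex ℝ S) {T : E →L[ℂ] E} (hT : T ∈ wotClosure E S) {ι : Type*} [Finite ι]
    (w : ι → E) {δ : ℝ} (hδ : 0 < δ) : ∃ M ∈ S, ∀ i, ‖M (w i) - T (w i)‖ < δ := by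
  classical
  cases nonempty_fintype ι
  let ev : (E →WOT[ℂ] E) →ₗ[ℂ] (ι → E) :=
    { toFun := fun A i => A (w i), map_add' := fun _ _ => rfl, map_smul' := fun _ _ => rfl }
  have hev (f : StrongDual ℂ (ι → E)) : Continuous (ev.dualMap f) := by
    have : ⇑(ev.dualMap f) =
        fun A => ∑ i, (f ∘L ContinuousLinearMap.single ℂ (fun _ => E) i) (A (w i)) := by
      ext A
      simp only [LinearMap.dualMap_apply, ContinuousLinearMap.coe_coe,
        ContinuousLinearMap.comp_apply, ContinuousLinearMap.single_apply, ← map_sum,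
        Finset.univ_sum_single]
      rfl
    rw [this]
    exact continuous_finsetSum _ fun i _ => continuous_dual_apply _ _
  have hconv : Convex ℝ (ofCLM '' S : Set (E →WOT[ℂ] E)) :=
    hS.linear_image ((linearEquiv ℝ).symm.toLinearMap : (E →L[ℂ] E) →ₗ[ℝ] (E →WOT[ℂ] E))
  obtain ⟨_, ⟨_, ⟨M, hM, rfl⟩, rfl⟩, hdist⟩ :=
    Metric.mem_closure_iff.mp (ev.image_closure_of_convex hconv hev ⟨_, hT, rfl⟩) δ hδ
  exact ⟨M, hM, fun i => by rw [← dist_eq_norm']; exact (dist_pi_lt_iff hδ).mp hdist i⟩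

end WOTClosure

namespace StarSubalgebra

open scoped ComplexStarModule

variable {E : Type*} [NormedAddCommGroup E] [InnerProductSpace ℂ E] [CompleteSpace E]

/-- The WOT-closure of a star subalgebra, as a star subalgebra: it is transported from
`E →WOT[ℂ] E`, where multiplication is separately continuous and `star` is continuous. -/
noncomputable def wotTopologicalClosure (A : StarSubalgebra ℂ (E →L[ℂ] E)) :
    StarSubalgebra ℂ (E →L[ℂ] E) :=
  let e : (E →L[ℂ] E) ≃⋆ₐ[ℂ] (E →WOT[ℂ] E) :=
    { (ContinuousLinearMapWOT.algEquiv ℂ).symm with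
      map_smul' := fun _ _ => rfl
      map_star' := fun _ => rfl }
  (A.map e.toStarAlgHom).topologicalClosure.comap e.toStarAlgHom

lemma convex_selfAdjoint (A : StarSubalgebra ℂ (E →L[ℂ] E)) :
    Convex ℝ {M | M ∈ A ∧ IsSelfAdjoint M} := by
  intro M hM N hN s t _ _ _
  refine ⟨?_, ((IsSelfAdjoint.all s).smul hM.2).add ((IsSelfAdjoint.all t).smul hN.2)⟩
  rw [← Complex.coe_smul, ← Complex.coe_smul]
  exact add_mem (A.smul_mem hM.1 _) (A.smul_mem hN.1 _)

lemma mem_wotClosure_selfAdjoint {A : StarSubalgebra ℂ (E →L[ℂ] E)} {S : E →L[ℂ] E}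
    (hS : S ∈ wotClosure E A) (hSsa : IsSelfAdjoint S) :
    S ∈ wotClosure E {M | M ∈ A ∧ IsSelfAdjoint M} := by
  have hmaps : MapsTo (fun M => (ℜ M : E →L[ℂ] E)) (A : Set (E →L[ℂ] E))
      {M | M ∈ A ∧ IsSelfAdjoint M} := by
    intro M hM
    refine ⟨?_, selfAdjoint.isSelfAdjoint⟩
    change (ℜ M : E →L[ℂ] E) ∈ A
    rw [realPart_apply_coe, ← Complex.coe_smul]
    exact A.smul_mem (add_mem hM (star_mem hM)) _
  have hcont : Continuous fun A : E →WOT[ℂ] E => (2⁻¹ : ℝ) • (A + star A) := by fun_prop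
  simpa only [hSsa.coe_realPart] using mapsTo_wotClosure hcont hmaps hS

end StarSubalgebra

open Metric in
lemma Submodule.closure_inter_closedBall_subset {𝕜 X : Type*} [RCLike 𝕜] [NormedAddCommGroup X]
    [NormedSpace 𝕜 X] (s : Submodule 𝕜 X) :
    closure (s : Set X) ∩ closedBall 0 1 ⊆ closure (s ∩ closedBall 0 1) := by
  rintro y ⟨hys, hy⟩
  have hcont : Continuous fun t : ℝ => (t : 𝕜) • y := by fun_prop
  have hlim : Tendsto (fun t : ℝ => (t : 𝕜) • y) (𝓝[<] 1) (𝓝 y) :=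
    tendsto_nhdsWithin_of_tendsto_nhds (by simpa using hcont.tendsto 1)
  refine isClosed_closure.mem_of_tendsto hlim ?_
  filter_upwards [Ioo_mem_nhdsLT zero_lt_one] with t ht
  have hball : (t : 𝕜) • y ∈ ball (0 : X) 1 := by
    rw [mem_ball_zero_iff, norm_smul, RCLike.norm_ofReal, abs_of_pos ht.1]
    exact (mul_le_of_le_one_right ht.1.le (mem_closedBall_zero_iff.mp hy)).trans_lt ht.2
  have := isOpen_ball.inter_closure ⟨hball, s.topologicalClosure.smul_mem (t : 𝕜) hys⟩
  rw [inter_comm] at this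
  exact closure_mono (inter_subset_inter_right _ ball_subset_closedBall) this

lemma mul_sub_mul_eq_of_mul_one_add_sq {R : Type*} [Ring R] {a b u v : R}
    (hu : u * (1 + a ^ 2) = 1) (hv : (1 + b ^ 2) * v = 1) :
    u * a - b * v = u * (a - b) * v - u * a * (a - b) * (b * v) := by
  calc u * a - b * v = u * a * ((1 + b ^ 2) * v) - u * (1 + a ^ 2) * (b * v) := by
        rw [hv, hu]; noncomm_ring
    _ = _ := by noncomm_ring

/-- `t ↦ 2t / (1 + t²)` maps `ℝ` onto `[-1, 1]`, and `f(a) - f(b)` factors algebraically through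
`a - b` by `mul_sub_mul_eq_of_mul_one_add_sq`; `kaplanskyInv` inverts it on `[-1, 1]`. -/
noncomputable def kaplanskyFun (t : ℝ) : ℝ := 2 * (t * (1 + t ^ 2)⁻¹)

noncomputable def kaplanskyInv (t : ℝ) : ℝ := t / (1 + √(1 - t ^ 2))

lemma continuous_kaplanskyFun : Continuous kaplanskyFun := by
  unfold kaplanskyFun
  fun_prop (disch := intro; positivity)

lemma continuous_kaplanskyInv : Continuous kaplanskyInv :=
  continuous_id.div (by fun_prop) fun t => by positivity

lemma abs_kaplanskyFun_le_one (t : ℝ) : |kaplanskyFun t| ≤ 1 := by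
  have h : 0 < 1 + t ^ 2 := by positivity
  rw [kaplanskyFun, ← div_eq_mul_inv, abs_le, ← mul_div_assoc, le_div_iff₀ h, div_le_iff₀ h]
  constructor <;> nlinarith [sq_nonneg (t + 1), sq_nonneg (t - 1)]

lemma kaplanskyFun_kaplanskyInv {t : ℝ} (ht : |t| ≤ 1) : kaplanskyFun (kaplanskyInv t) = t := by
  have hr : √(1 - t ^ 2) ^ 2 = 1 - t ^ 2 := Real.sq_sqrt (by nlinarith [sq_abs t, abs_nonneg t])
  have hpos : 0 < 1 + √(1 - t ^ 2) := by positivity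
  unfold kaplanskyFun kaplanskyInv
  field_simp
  linear_combination (-t) * hr

section CFC

variable {A : Type*} [CStarAlgebra A] {a : A}

lemma continuous_inv_one_add_sq : Continuous fun t : ℝ => (1 + t ^ 2)⁻¹ := by
  fun_prop (disch := intro; positivity)

lemma cfc_one_add_sq (ha : IsSelfAdjoint a) : cfc (fun t : ℝ => 1 + t ^ 2) a = 1 + a ^ 2 := by
  rw [cfc_const_add (1 : ℝ) (fun t : ℝ => t ^ 2) a, cfc_pow_id a 2, map_one]

lemma cfc_inv_one_add_sq_mul (ha : IsSelfAdjoint a) :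
    cfc (fun t : ℝ => (1 + t ^ 2)⁻¹) a * (1 + a ^ 2) = 1 := by
  rw [← cfc_one_add_sq ha, ← cfc_mul _ _ a continuous_inv_one_add_sq.continuousOn, ← cfc_one ℝ a]
  exact cfc_congr fun t _ => inv_mul_cancel₀ (by positivity)

lemma one_add_sq_mul_cfc_inv (ha : IsSelfAdjoint a) :
    (1 + a ^ 2) * cfc (fun t : ℝ => (1 + t ^ 2)⁻¹) a = 1 := by
  rw [← cfc_one_add_sq ha, ← cfc_mul _ _ a (by fun_prop) continuous_inv_one_add_sq.continuousOn,
    ← cfc_one ℝ a]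
  exact cfc_congr fun t _ => mul_inv_cancel₀ (by positivity)

lemma cfc_kaplanskyFun_eq_mul (ha : IsSelfAdjoint a) :
    cfc kaplanskyFun a = (2 : ℝ) • (a * cfc (fun t : ℝ => (1 + t ^ 2)⁻¹) a) := by
  unfold kaplanskyFun
  rw [cfc_const_mul _ _ a (by fun_prop (disch := intro; positivity)),
    cfc_mul (fun t : ℝ => t) _ a (by fun_prop) continuous_inv_one_add_sq.continuousOn,
    cfc_id' ℝ a]

lemma cfc_kaplanskyFun_eq_mul' (ha : IsSelfAdjoint a) :
    cfc kaplanskyFun a = (2 : ℝ) • (cfc (fun t : ℝ => (1 + t ^ 2)⁻¹) a * a) := by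
  rw [cfc_kaplanskyFun_eq_mul ha, ((Commute.refl a).cfc_real _).eq]

lemma norm_cfc_inv_one_add_sq_le (a : A) : ‖cfc (fun t : ℝ => (1 + t ^ 2)⁻¹) a‖ ≤ 1 :=
  norm_cfc_le zero_le_one fun t _ => by
    rw [Real.norm_eq_abs, abs_of_pos (by positivity)]
    exact inv_le_one_of_one_le₀ (by nlinarith [sq_nonneg t])

lemma norm_cfc_kaplanskyFun_le (a : A) : ‖cfc kaplanskyFun a‖ ≤ 1 :=
  norm_cfc_le zero_le_one fun t _ => abs_kaplanskyFun_le_one t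

lemma cfc_kaplanskyFun_cfc_kaplanskyInv (ha : IsSelfAdjoint a) (ha1 : ‖a‖ ≤ 1) :
    cfc kaplanskyFun (cfc kaplanskyInv a) = a := by
  rw [← cfc_comp' kaplanskyFun kaplanskyInv a continuous_kaplanskyFun.continuousOn
    continuous_kaplanskyInv.continuousOn]
  conv_rhs => rw [← cfc_id' ℝ a]
  refine cfc_congr fun t ht => kaplanskyFun_kaplanskyInv ?_
  have := norm_apply_le_norm_cfc (fun t : ℝ => t) a ht
  rw [cfc_id' ℝ a] at this
  exact this.trans ha1

end CFC

section Kaplansky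

variable {K : Type*} [NormedAddCommGroup K] [InnerProductSpace ℂ K] [CompleteSpace K]

lemma norm_cfc_kaplanskyFun_apply_sub_le {a b : K →L[ℂ] K} (ha : IsSelfAdjoint a)
    (hb : IsSelfAdjoint b) (x : K) :
    ‖cfc kaplanskyFun a x - cfc kaplanskyFun b x‖ ≤
      2 * ‖(a - b) (cfc (fun t : ℝ => (1 + t ^ 2)⁻¹) b x)‖ +
        ‖(a - b) (b (cfc (fun t : ℝ => (1 + t ^ 2)⁻¹) b x))‖ := by
  set u := cfc (fun t : ℝ => (1 + t ^ 2)⁻¹) a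
  set w := cfc (fun t : ℝ => (1 + t ^ 2)⁻¹) b x
  have hu : ‖u‖ ≤ 1 := norm_cfc_inv_one_add_sq_le a
  have hua : ‖u * a‖ ≤ 2⁻¹ := by
    have := norm_cfc_kaplanskyFun_le a
    rw [cfc_kaplanskyFun_eq_mul' ha, norm_smul, Real.norm_two] at this
    linarith
  have hdiff : cfc kaplanskyFun a x - cfc kaplanskyFun b x =
      (2 : ℝ) • (u ((a - b) w) - (u * a) ((a - b) (b w))) := by
    rw [← sub_apply, cfc_kaplanskyFun_eq_mul' ha, cfc_kaplanskyFun_eq_mul hb, ← smul_sub,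
      mul_sub_mul_eq_of_mul_one_add_sq (cfc_inv_one_add_sq_mul ha) (one_add_sq_mul_cfc_inv hb)]
    rfl
  calc ‖cfc kaplanskyFun a x - cfc kaplanskyFun b x‖
      ≤ 2 * (‖u‖ * ‖(a - b) w‖ + ‖u * a‖ * ‖(a - b) (b w)‖) := by
        rw [hdiff, norm_smul, Real.norm_two]
        gcongr
        exact (norm_sub_le _ _).trans (add_le_add (u.le_opNorm _) ((u * a).le_opNorm _))
    _ ≤ 2 * (1 * ‖(a - b) w‖ + 2⁻¹ * ‖(a - b) (b w)‖) := by gcongr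
    _ = 2 * ‖(a - b) w‖ + ‖(a - b) (b w)‖ := by ring

theorem kaplansky_density_of_isSelfAdjoint (A : StarSubalgebra ℂ (K →L[ℂ] K))
    {T : K →L[ℂ] K} (hT : T ∈ wotClosure K A) (hTsa : IsSelfAdjoint T) (hT1 : ‖T‖ ≤ 1) (x : K)
    {ε : ℝ} (hε : 0 < ε) : ∃ R ∈ A, ‖R‖ ≤ 1 ∧ ‖R x - T x‖ < ε := by
  set S := cfc kaplanskyInv T
  have hSsa : IsSelfAdjoint S := cfc_predicate _ _
  have hS : S ∈ wotClosure K {M | M ∈ A ∧ IsSelfAdjoint M} :=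
    StarSubalgebra.mem_wotClosure_selfAdjoint
      (cfc_mem (s := A.wotTopologicalClosure) (hs := isClosed_wotClosure _) _ hT) hSsa
  set w := cfc (fun t : ℝ => (1 + t ^ 2)⁻¹) S x
  obtain ⟨a, ⟨haA, hasa⟩, ha⟩ :=
    A.convex_selfAdjoint.exists_forall_norm_apply_sub_lt_of_mem_wotClosure hS ![w, S w]
      (δ := ε / 4) (by positivity)
  have hfa : ‖cfc kaplanskyFun a x - T x‖ < 3 * (ε / 4) := by
    conv_lhs => rw [← cfc_kaplanskyFun_cfc_kaplanskyInv hTsa hT1]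
    have h0 := ha 0
    have h1 := ha 1
    simp only [Matrix.cons_val_zero, Matrix.cons_val_one, ← sub_apply] at h0 h1
    linarith [norm_cfc_kaplanskyFun_apply_sub_le hasa hSsa x]
  have hball : cfc kaplanskyFun a ∈ closure (A.toSubalgebra.toSubmodule ∩ Metric.closedBall 0 1) :=
    Submodule.closure_inter_closedBall_subset _
      ⟨cfc_mem (s := A.topologicalClosure) (hs := A.isClosed_topologicalClosure) _
        (A.le_topologicalClosure haA), mem_closedBall_zero_iff.mpr (norm_cfc_kaplanskyFun_le a)⟩
  obtain ⟨_, ⟨R, ⟨hRA, hR1⟩, rfl⟩, hRx⟩ := Metric.mem_closure_iff.mp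
    (map_mem_closure (ContinuousLinearMap.apply ℂ K x).continuous hball (mapsTo_image _ _))
    (ε / 4) (by positivity)
  refine ⟨R, hRA, mem_closedBall_zero_iff.mp hR1, ?_⟩
  calc ‖R x - T x‖ ≤ ‖R x - cfc kaplanskyFun a x‖ + ‖cfc kaplanskyFun a x - T x‖ :=
        norm_sub_le_norm_sub_add_norm_sub _ _ _
    _ < ε / 4 + 3 * (ε / 4) := by
        rw [← dist_eq_norm, dist_comm]
        exact add_lt_add hRx hfa
    _ = ε := by ring

end Kaplansky

section Amplification

open ContinuousLinearMap

variable {H : Type*} [NormedAddCommGroup H] [InnerProductSpace ℂ H] {ι : Type*}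

local notation "Hι" => PiLp 2 (fun _ : ι => H)

variable (H) in
noncomputable def coordProj (i : ι) : Hι →L[ℂ] H := PiLp.proj 2 (fun _ : ι => H) i

@[simp]
lemma coordProj_apply (i : ι) (v : Hι) : coordProj H i v = v i := rfl

variable [Fintype ι]

lemma norm_coordProj_le (i : ι) : ‖coordProj H i‖ ≤ 1 :=
  opNorm_le_bound _ zero_le_one fun v => by simpa using PiLp.norm_apply_le v i

variable [CompleteSpace H]

variable (H) in
noncomputable def coordSingle (i : ι) : H →L[ℂ] Hι := (coordProj H i).adjoint

lemma adjoint_coordSingle (i : ι) : (coordSingle H i).adjoint = coordProj H i :=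
  adjoint_adjoint _

lemma norm_coordSingle_le (i : ι) : ‖coordSingle H i‖ ≤ 1 := by
  rw [coordSingle, LinearIsometryEquiv.norm_map]
  exact norm_coordProj_le i

variable [DecidableEq ι]

@[simp]
lemma coordSingle_apply (i : ι) (x : H) : coordSingle H i x = PiLp.single 2 i x := by
  refine ext_inner_left ℂ fun v => ?_
  rw [coordSingle, adjoint_inner_right, PiLp.inner_apply]
  simp [PiLp.single_apply, apply_ite (inner ℂ _)]

lemma coordProj_comp_coordSingle (i j : ι) :
    coordProj H i ∘L coordSingle H j = if i = j then 1 else 0 := by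
  ext x
  split_ifs with h <;> simp [h]

lemma sum_coordSingle_comp_coordProj :
    ∑ i, coordSingle H i ∘L coordProj H i = (1 : Hι →L[ℂ] Hι) := by
  ext v j
  simp

lemma coordProj_comp_mul_comp_coordSingle (M N : Hι →L[ℂ] Hι) (i j : ι) :
    coordProj H i ∘L (M * N) ∘L coordSingle H j =
      ∑ k, (coordProj H i ∘L M ∘L coordSingle H k) * (coordProj H k ∘L N ∘L coordSingle H j) := by
  calc coordProj H i ∘L (M * N) ∘L coordSingle H j
      = coordProj H i ∘L M ∘L (∑ k, coordSingle H k ∘L coordProj H k) ∘L N ∘L coordSingle H j := by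
        rw [sum_coordSingle_comp_coordProj]; rfl
    _ = _ := by simp only [comp_finsetSum, finsetSum_comp, mul_def, comp_assoc]

variable (ι) in
/-- The algebra `Mₙ(A)` of `ι × ι` matrices over `A`, acting on `⨁ᵢ H`. -/
noncomputable def StarSubalgebra.amplification (A : StarSubalgebra ℂ (H →L[ℂ] H)) :
    StarSubalgebra ℂ (Hι →L[ℂ] Hι) where
  carrier := {M | ∀ i j, coordProj H i ∘L M ∘L coordSingle H j ∈ A}
  mul_mem' {M N} hM hN i j := by
    rw [coordProj_comp_mul_comp_coordSingle]
    exact sum_mem fun k _ => mul_mem (hM i k) (hN k j)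
  add_mem' {M N} hM hN i j := by
    simpa [add_comp, comp_add] using add_mem (hM i j) (hN i j)
  algebraMap_mem' c i j := by
    rw [Algebra.algebraMap_eq_smul_one, smul_comp, comp_smul, one_def, id_comp,
      coordProj_comp_coordSingle]
    split_ifs
    · exact A.smul_mem (one_mem A) c
    · exact A.smul_mem (zero_mem A) c
  star_mem' {M} hM i j := by
    have := star_mem (hM j i)
    rwa [star_eq_adjoint, adjoint_comp, adjoint_comp, adjoint_coordSingle, ← star_eq_adjoint,
      comp_assoc] at this

lemma coordSingle_comp_comp_coordProj_mem_amplification {A : StarSubalgebra ℂ (H →L[ℂ] H)}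
    {R : H →L[ℂ] H} (hR : R ∈ A) (k l : ι) :
    coordSingle H k ∘L R ∘L coordProj H l ∈ A.amplification ι := by
  intro i j
  simp only [← comp_assoc, coordProj_comp_coordSingle]
  simp only [comp_assoc, coordProj_comp_coordSingle]
  split_ifs <;> simp only [one_def, id_comp, comp_id, zero_comp, comp_zero, hR, zero_mem]

end Amplification

section Dilation

open ContinuousLinearMap

variable {H : Type*} [NormedAddCommGroup H] [InnerProductSpace ℂ H] [CompleteSpace H]

noncomputable def hermitianDilation (T : H →L[ℂ] H) :
    PiLp 2 (fun _ : Fin 2 => H) →L[ℂ] PiLp 2 (fun _ : Fin 2 => H) :=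
  coordSingle H 0 ∘L T ∘L coordProj H 1 + coordSingle H 1 ∘L star T ∘L coordProj H 0

lemma hermitianDilation_apply (T : H →L[ℂ] H) (v : PiLp 2 (fun _ : Fin 2 => H)) :
    hermitianDilation T v = PiLp.single 2 0 (T (v 1)) + PiLp.single 2 1 (star T (v 0)) := by
  simp [hermitianDilation]

lemma isSelfAdjoint_hermitianDilation (T : H →L[ℂ] H) : IsSelfAdjoint (hermitianDilation T) := by
  rw [isSelfAdjoint_iff', hermitianDilation, map_add, adjoint_comp, adjoint_comp, adjoint_comp,
    adjoint_comp, adjoint_coordSingle, adjoint_coordSingle, star_eq_adjoint, adjoint_adjoint,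
    add_comm]
  rfl

lemma norm_hermitianDilation_le (T : H →L[ℂ] H) : ‖hermitianDilation T‖ ≤ ‖T‖ := by
  refine opNorm_le_bound _ (norm_nonneg T) fun v => ?_
  have h0 := T.le_opNorm (v 1)
  have h1 := (star T).le_opNorm (v 0)
  rw [norm_star] at h1
  have key : ‖hermitianDilation T v‖ ^ 2 ≤ (‖T‖ * ‖v‖) ^ 2 := by
    simp only [hermitianDilation_apply, PiLp.norm_sq_eq_of_L2, PiLp.add_apply, PiLp.single_apply,
      Fin.sum_univ_two, Fin.isValue, ↓reduceIte, zero_ne_one, one_ne_zero, add_zero, zero_add,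
      mul_pow]
    nlinarith [pow_le_pow_left₀ (norm_nonneg _) h0 2, pow_le_pow_left₀ (norm_nonneg _) h1 2]
  exact le_of_pow_le_pow_left₀ two_ne_zero (by positivity) key

lemma hermitianDilation_mem_amplification {A : StarSubalgebra ℂ (H →L[ℂ] H)} {R : H →L[ℂ] H}
    (hR : R ∈ A) : hermitianDilation R ∈ A.amplification (Fin 2) :=
  add_mem (coordSingle_comp_comp_coordProj_mem_amplification hR 0 1)
    (coordSingle_comp_comp_coordProj_mem_amplification (star_mem hR) 1 0)

lemma hermitianDilation_mem_wotClosure {A : StarSubalgebra ℂ (H →L[ℂ] H)} {T : H →L[ℂ] H}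
    (hT : T ∈ wotClosure H A) : hermitianDilation T ∈ wotClosure _ (A.amplification (Fin 2)) := by
  refine mapsTo_wotClosure ?_ (fun _ => hermitianDilation_mem_amplification) hT
  have h1 := continuous_ofCLM_comp_comp (coordSingle H (0 : Fin 2)) (coordProj H 1)
  have h2 := (continuous_ofCLM_comp_comp (coordSingle H (1 : Fin 2)) (coordProj H 0)).comp
    continuous_star
  exact h1.add h2

theorem kaplansky_density (A : StarSubalgebra ℂ (H →L[ℂ] H)) {T : H →L[ℂ] H}
    (hT : T ∈ wotClosure H A) (hT1 : ‖T‖ ≤ 1) (x : H) {ε : ℝ} (hε : 0 < ε) :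
    ∃ R ∈ A, ‖R‖ ≤ 1 ∧ ‖R x - T x‖ < ε := by
  obtain ⟨M, hM, hM1, hMx⟩ := kaplansky_density_of_isSelfAdjoint (A.amplification (Fin 2))
    (hermitianDilation_mem_wotClosure hT) (isSelfAdjoint_hermitianDilation T)
    ((norm_hermitianDilation_le T).trans hT1) (coordSingle H 1 x) hε
  refine ⟨coordProj H 0 ∘L M ∘L coordSingle H 1, hM 0 1, ?_, ?_⟩
  · refine (opNorm_comp_le _ _).trans (mul_le_one₀ (norm_coordProj_le 0) (norm_nonneg _) ?_)
    exact (opNorm_comp_le _ _).trans (mul_le_one₀ hM1 (norm_nonneg _) (norm_coordSingle_le 1))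
  · have hTx : T x = coordProj H 0 (hermitianDilation T (coordSingle H 1 x)) := by
      simp [hermitianDilation_apply]
    rw [hTx, comp_apply, comp_apply, ← map_sub]
    exact (PiLp.norm_apply_le _ 0).trans_lt hMx

end Dilation

lemma IsLocalizing.of_forall_exists_norm_apply_sub_lt {E : Type*} [NormedAddCommGroup E]
    [NormedSpace ℂ E] {S S' : Set (E →L[ℂ] E)} (hS : IsLocalizing S)
    (h : ∀ T ∈ S, ‖T‖ ≤ 1 → ∀ (x : E) (ε : ℝ), 0 < ε → ∃ R ∈ S', ‖R‖ ≤ 1 ∧ ‖R x - T x‖ < ε) :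
    IsLocalizing S' := by
  obtain ⟨c, r, hr, h0, hseq⟩ := hS
  refine ⟨c, r, hr, h0, fun x hx => ?_⟩
  obtain ⟨n, X, y, hn, hXS, hX1, hy, hXy⟩ := hseq x hx
  choose R hRS hR1 hRX using fun j : ℕ =>
    h (X j) (hXS j) (hX1 j) (x (n j)) (1 / ((j : ℝ) + 1)) Nat.one_div_pos_of_nat
  refine ⟨n, R, y, hn, hRS, hR1, hy, ?_⟩
  have hdiff : Tendsto (fun j => R j (x (n j)) - X j (x (n j))) atTop (𝓝 0) :=
    squeeze_zero_norm (fun j => (hRX j).le) tendsto_one_div_add_atTop_nhds_zero_nat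
  simpa using hdiff.add hXy

/-- If `𝓡` is a selfadjoint algebra of operators on a Hilbert space whose closure in the
weak operator topology is localizing, then `𝓡` itself is localizing. -/
theorem localizing_of_wotClosure_localizing_selfadjoint
    {H : Type*} [NormedAddCommGroup H] [InnerProductSpace ℂ H] [CompleteSpace H]
    (𝓡 : Subalgebra ℂ (H →L[ℂ] H))
    (hsa : ∀ R ∈ 𝓡, ContinuousLinearMap.adjoint R ∈ 𝓡)
    (hloc : IsLocalizing (wotClosure H (𝓡 : Set (H →L[ℂ] H)))) :
    IsLocalizing (𝓡 : Set (H →L[ℂ] H)) :=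
  let A : StarSubalgebra ℂ (H →L[ℂ] H) := { 𝓡 with star_mem' := hsa _ }
  hloc.of_forall_exists_norm_apply_sub_lt fun _ hT hT1 x _ hε => kaplansky_density A hT hT1 x hε
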